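/- With C_i^k = Ψ_i(Cᵏ) as above, if A ∈ 𝒞_u and B ∈ 𝒞_v with u > v (where 𝒞_m = {C_i^k : |i|+k = m}), then either A ∩ B = ∅ or A ⊆ B. -/

import Mathlib

noncomputable section

open Set Metric MeasureTheory

/-- Distance between two sets. -/
def setDist {X : Type*} [MetricSpace X] (A B : Set X) : ℝ := sInf (Set.image2 dist A B)

/-- Lipschitz equivalence of two sets: a bi-Lipschitz bijection between them. -/
def LipEquivOn {X Y : Type*} [MetricSpace X] [MetricSpace Y] (E : Set X) (F : Set Y) : Prop :=
  ∃ (f : X → Y) (c c' : ℝ), 0 < c ∧ c ≤ c' ∧ Set.BijOn f E F ∧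
    ∀ x ∈ E, ∀ y ∈ E, c * dist x y ≤ dist (f x) (f y) ∧ dist (f x) (f y) ≤ c' * dist x y

/-- The affine contraction `x ↦ ρ i * x + t i`. -/
def affMap (r t : ℕ → ℝ) (i : ℕ) (x : ℝ) : ℝ := r i * x + t i

/-- Composition of the affine maps along a word (first letter outermost). -/
def affWord (r t : ℕ → ℝ) : List ℕ → ℝ → ℝ
  | [] => id
  | i :: w => affMap r t i ∘ affWord r t w

/-- Cylinder of a general IFS for a word over `Fin n`. -/
def cylW {X : Type*} {n : ℕ} (Ψ : Fin n → X → X) (F : Set X) (w : List (Fin n)) : Set X :=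
  (w.foldr (fun i g => Ψ i ∘ g) id) '' F

/-- A (separable) contraction vector `(ρ 0, …, ρ (n-1))` in `ℝ`. -/
structure ContractionVec (n : ℕ) (ρ : ℕ → ℝ) : Prop where
  three_le : 3 ≤ n
  pos : ∀ i, i < n → 0 < ρ i
  lt_one : ∀ i, i < n → ρ i < 1
  sum_lt : (∑ i ∈ Finset.range n, ρ i) < 1

/-- The touching IFS of the standing setup, together with its attractor `T`. -/
structure TouchingIFS (n : ℕ) (ρ : ℕ → ℝ) where
  t : ℕ → ℝ
  T : Set ℝ
  order : ∀ i, i + 1 < n → affMap ρ t i 1 ≤ affMap ρ t (i + 1) 0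
  left0 : affMap ρ t 0 0 = 0
  right1 : affMap ρ t (n - 1) 1 = 1
  touch_ex : ∃ i, i + 1 < n ∧ affMap ρ t i 1 = affMap ρ t (i + 1) 0
  compactT : IsCompact T
  nonemptyT : T.Nonempty
  invT : T = ⋃ i ∈ Finset.range n, affMap ρ t i '' T

/-- The dust-like, equally spaced IFS of the standing setup, with attractor `D`. -/
structure DustIFS (n : ℕ) (ρ : ℕ → ℝ) where
  d : ℕ → ℝ
  D : Set ℝ
  left0 : affMap ρ d 0 0 = 0
  right1 : affMap ρ d (n - 1) 1 = 1
  equal_gap : ∀ i, i + 1 < n →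
    affMap ρ d (i + 1) 0 - affMap ρ d i 1 = (1 - ∑ j ∈ Finset.range n, ρ j) / (n - 1)
  compactD : IsCompact D
  nonemptyD : D.Nonempty
  invD : D = ⋃ i ∈ Finset.range n, affMap ρ d i '' D

variable {n : ℕ} {ρ : ℕ → ℝ}

/-- Cylinder `T_w`. -/
def TouchingIFS.cyl (S : TouchingIFS n ρ) (w : List ℕ) : Set ℝ := affWord ρ S.t w '' S.T

/-- `i` is a (left) touching letter. -/
def TouchingIFS.touch (S : TouchingIFS n ρ) (i : ℕ) : Prop :=
  i + 1 < n ∧ affMap ρ S.t i 1 = affMap ρ S.t (i + 1) 0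

/-- Left touching patch `L_k(T_w)` (with `α` the initial touching run length). -/
def TouchingIFS.patchL (S : TouchingIFS n ρ) (α : ℕ) (w : List ℕ) (k : ℕ) : Set ℝ :=
  ⋃ j ∈ Finset.range α, S.cyl (w ++ List.replicate k 0 ++ [j])

/-- Right touching patch `R_k(T_w)` (with `β` the final touching run length). -/
def TouchingIFS.patchR (S : TouchingIFS n ρ) (β : ℕ) (w : List ℕ) (k : ℕ) : Set ℝ :=
  ⋃ j ∈ Finset.Ico (n - β) n, S.cyl (w ++ List.replicate k (n - 1) ++ [j])

/-- `α` is the number of successive touching intervals at the beginning. -/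
def TouchingIFS.alphaRun (S : TouchingIFS n ρ) (α : ℕ) : Prop :=
  1 ≤ α ∧ α < n ∧ (∀ i, i + 1 < α → S.touch i) ∧ ¬ S.touch (α - 1)

/-- `β` is the number of successive touching intervals at the end. -/
def TouchingIFS.betaRun (S : TouchingIFS n ρ) (β : ℕ) : Prop :=
  1 ≤ β ∧ β < n ∧ (∀ i, n - β ≤ i → i + 1 < n → S.touch i) ∧ ¬ S.touch (n - β - 1)

/-- Cylinder `D_w`. -/
def DustIFS.cyl (Q : DustIFS n ρ) (w : List ℕ) : Set ℝ := affWord ρ Q.d w '' Q.D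

/-- Left patch `L_k(D_w)`. -/
def DustIFS.patchL (Q : DustIFS n ρ) (α : ℕ) (w : List ℕ) (k : ℕ) : Set ℝ :=
  ⋃ j ∈ Finset.range α, Q.cyl (w ++ List.replicate k 0 ++ [j])

/-- Right patch `R_k(D_w)`. -/
def DustIFS.patchR (Q : DustIFS n ρ) (β : ℕ) (w : List ℕ) (k : ℕ) : Set ℝ :=
  ⋃ j ∈ Finset.Ico (n - β) n, Q.cyl (w ++ List.replicate k (n - 1) ++ [j])

/-- `τ k` is the unique positive integer with `ρₙᵏ ρ₁ < ρ₁ ^ τ(k) ≤ ρₙᵏ`. -/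
def tauSpec (ρ : ℕ → ℝ) (n : ℕ) (τ : ℕ → ℕ) : Prop :=
  ∀ k, 1 ≤ k → 1 ≤ τ k ∧ ρ (n - 1) ^ k * ρ 0 < ρ 0 ^ τ k ∧ ρ 0 ^ τ k ≤ ρ (n - 1) ^ k

/-- `Cᵏ = R_k(T_{i₀}) ∪ L_{τ(k)}(T_{i₀+1})`. -/
def Cset (S : TouchingIFS n ρ) (α β i₀ : ℕ) (τ : ℕ → ℕ) (k : ℕ) : Set ℝ :=
  S.patchR β [i₀] k ∪ S.patchL α [i₀ + 1] (τ k)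

/-- The touching letter `i` is left substitutable. -/
def TouchingIFS.LeftSub (S : TouchingIFS n ρ) (α : ℕ) (i : ℕ) : Prop :=
  ∃ (w : List ℕ) (a : ℕ) (k k' : ℕ), (∀ b ∈ w ++ [a], b < n) ∧
    Metric.diam (S.patchL α [i + 1] k) = Metric.diam (S.patchL α (i :: (w ++ [a])) k') ∧
    a ≠ 0 ∧ ∀ ℓ, S.touch ℓ → a ≠ ℓ + 1

/-- The touching letter `i` is right substitutable. -/
def TouchingIFS.RightSub (S : TouchingIFS n ρ) (β : ℕ) (i : ℕ) : Prop :=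
  ∃ (w : List ℕ) (a : ℕ) (k k' : ℕ), (∀ b ∈ w ++ [a], b < n) ∧
    Metric.diam (S.patchR β [i] k) = Metric.diam (S.patchR β ((i + 1) :: (w ++ [a])) k') ∧
    a ≠ n - 1 ∧ ¬ S.touch a

/-- Convex hull of a bounded set of reals: the minimal closed interval containing it. -/
def CH (B : Set ℝ) : Set ℝ := Set.Icc (sInf B) (sSup B)

/-- `[a,b]` is a maximal run of touching letters (a first-level connected component). -/
def TouchingIFS.run (S : TouchingIFS n ρ) (a b : ℕ) : Prop :=
  a ≤ b ∧ b < n ∧ (∀ i, a ≤ i → i < b → S.touch i) ∧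
  (a = 0 ∨ ¬ S.touch (a - 1)) ∧ (b = n - 1 ∨ ¬ S.touch b)

/-- Membership in the class `𝒯⁽¹⁾`: a `T`-separate copy `Ψ_w(T⁽¹⁾_j)`. -/
def TouchingIFS.T1mem (S : TouchingIFS n ρ) (X : Set ℝ) : Prop :=
  ∃ (w : List ℕ) (a b : ℕ), (∀ c ∈ w, c < n) ∧ S.run a b ∧
    X = affWord ρ S.t w '' (⋃ j ∈ Finset.Icc a b, S.cyl [j]) ∧
    0 < setDist X (S.T \ X)

/-- Membership in the class `𝒯⁽²⁾`: a copy `Ψ_w(T⁽²⁾_i) = Ψ_w(R₀(T_i) ∪ L₀(T_{i+1}))`. -/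
def TouchingIFS.T2mem (S : TouchingIFS n ρ) (α β : ℕ) (X : Set ℝ) : Prop :=
  ∃ (w : List ℕ) (i : ℕ), (∀ c ∈ w, c < n) ∧ S.touch i ∧
    X = affWord ρ S.t w '' (S.patchR β [i] 0 ∪ S.patchL α [i + 1] 0)

/-- An admissible family for the simple decomposition of `E` by the `A i`. -/
def GoodFam (E : Set ℝ) {k : ℕ} (A : Fin k → Set ℝ) (𝒮 : Finset (Set ℝ)) : Prop :=
  (∀ B ∈ 𝒮, IsCompact B ∧ B ⊆ E) ∧ (⋃ B ∈ 𝒮, B) = E ∧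
  (∀ B ∈ 𝒮, ∀ B' ∈ 𝒮, B ≠ B' → CH B ∩ CH B' = ∅) ∧ (∀ i, A i ∈ 𝒮)

/-!
Each `Ψ a` is increasing and maps `[0,1]` into the `a`-th of a chain of intervals that meet at
most at endpoints. Since `Cᵏ` lies in the open interval `(0,1)`, so does every `Ψ_w(Cᵏ)`, and
images of such sets under maps with different first letters are disjoint. Cancelling the common
prefix of `i` and `j` thus reduces the claim to comparing `Ψ_w(Cᵏ)` with `Cˡ`; for `w = []` one
has `Cᵏ ⊆ Cˡ` because `R_k`, `L_k` decrease and `τ` increases.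

For `w ≠ []` write `Cˡ = Ψ_{i₀}(R_ℓ) ∪ Ψ_{i₀+1}(L_{τ(ℓ)})` with `R_{m+1} = Ψ_{n-1}(R_m)` and
`L_{m+1} = Ψ_0(L_m)`. Only a word starting with `i₀` (resp. `i₀+1`) can meet `Cˡ`; reading the
rest of it letter by letter, `Ψ_w(Cᵏ)` is disjoint from `R_ℓ` (resp. `L_{τ(ℓ)}`) unless it
continues with `ℓ` letters `n-1` (resp. `τ(ℓ) ≥ ℓ` letters `0`), and then it is contained in it.
The recursion ends at `Cᵏ` itself, which misses every `R_m`, `L_m` with `m ≥ 1` and is inside or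
disjoint from `R_0`, `L_0`, because the touching runs at both ends of `[0,1]` stop at non-touching
letters. So `Ψ_w(Cᵏ) ⊆ Cˡ` forces `ℓ < |w|`, which rules out containment in the other direction
under `|j| + ℓ < |i| + k`.
-/

theorem antitone_of_image_iterate {X : Type*} {f : X → X} {R : ℕ → Set X}
    (hR : ∀ m, R (m + 1) = f '' R m) (h₁ : R 1 ⊆ R 0) : Antitone R := by
  refine antitone_nat_of_succ_le fun m => ?_
  induction m with
  | zero => exact h₁
  | succ m ih =>
    calc R (m + 2) = f '' R (m + 1) := hR _
      _ ⊆ f '' R m := image_mono ih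
      _ = R (m + 1) := (hR m).symm

@[simp]
theorem affWord_nil (r t : ℕ → ℝ) : affWord r t [] = id := rfl

theorem image_affWord_cons (r t : ℕ → ℝ) (a : ℕ) (w : List ℕ) (X : Set ℝ) :
    affWord r t (a :: w) '' X = affMap r t a '' (affWord r t w '' X) :=
  image_comp _ _ _

theorem ContractionVec.strictMono_affMap {n : ℕ} {ρ : ℕ → ℝ} (hρ : ContractionVec n ρ)
    (t : ℕ → ℝ) {a : ℕ} (ha : a < n) : StrictMono (affMap ρ t a) := fun x y h => by
  unfold affMap
  nlinarith [hρ.pos a ha]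

namespace tauSpec

variable {n : ℕ} {ρ : ℕ → ℝ} {τ : ℕ → ℕ}

theorem monotoneOn (hρ : ContractionVec n ρ) (hτ : tauSpec ρ n τ) : MonotoneOn τ (Ici 1) := by
  intro ℓ hℓ k hk hℓk
  have hn := hρ.three_le
  have h₀ : 0 < ρ 0 := hρ.pos 0 (by omega)
  have h₀' : ρ 0 < 1 := hρ.lt_one 0 (by omega)
  have hlast : 0 < ρ (n - 1) := hρ.pos (n - 1) (by omega)
  have hlast' : ρ (n - 1) < 1 := hρ.lt_one (n - 1) (by omega)
  by_contra! hlt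
  have : ρ 0 ^ τ ℓ < ρ 0 ^ τ ℓ :=
    calc ρ 0 ^ τ ℓ ≤ ρ 0 ^ (τ k + 1) := pow_le_pow_of_le_one h₀.le h₀'.le hlt
      _ = ρ 0 ^ τ k * ρ 0 := pow_succ _ _
      _ ≤ ρ (n - 1) ^ k * ρ 0 := mul_le_mul_of_nonneg_right (hτ k hk).2.2 h₀.le
      _ ≤ ρ (n - 1) ^ ℓ * ρ 0 :=
        mul_le_mul_of_nonneg_right (pow_le_pow_of_le_one hlast.le hlast'.le hℓk) h₀.le
      _ < ρ 0 ^ τ ℓ := (hτ ℓ hℓ).2.1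
  exact lt_irrefl _ this

theorem self_le (hρ : ContractionVec n ρ) (hτ : tauSpec ρ n τ) (hρ1n : ρ (n - 1) ≤ ρ 0)
    (ℓ : ℕ) : ℓ ≤ τ ℓ := by
  rcases Nat.eq_zero_or_pos ℓ with rfl | hℓ
  · exact Nat.zero_le _
  have hn := hρ.three_le
  have h₀ : 0 < ρ 0 := hρ.pos 0 (by omega)
  have h₀' : ρ 0 < 1 := hρ.lt_one 0 (by omega)
  by_contra! hlt
  have : ρ 0 ^ ℓ < ρ 0 ^ ℓ :=
    calc ρ 0 ^ ℓ < ρ 0 ^ τ ℓ := pow_lt_pow_right_of_lt_one₀ h₀ h₀' hlt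
      _ ≤ ρ (n - 1) ^ ℓ := (hτ ℓ hℓ).2.2
      _ ≤ ρ 0 ^ ℓ := pow_le_pow_left₀ (hρ.pos (n - 1) (by omega)).le hρ1n ℓ
  exact lt_irrefl _ this

end tauSpec

namespace TouchingIFS

variable {n : ℕ} {ρ : ℕ → ℝ} (hρ : ContractionVec n ρ) (S : TouchingIFS n ρ)

local notation "Ψ" => affMap ρ S.t

theorem exists_affMap_eq {x : ℝ} (hx : x ∈ S.T) : ∃ a < n, ∃ y ∈ S.T, Ψ a y = x := by
  rw [S.invT] at hx
  simpa using hx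

theorem mapsTo_affMap_T {a : ℕ} (ha : a < n) : MapsTo (Ψ a) S.T S.T := fun x hx => by
  rw [S.invT]
  exact mem_biUnion (Finset.mem_range.2 ha) (mem_image_of_mem _ hx)

theorem mapsTo_affWord_T {w : List ℕ} (hw : ∀ a ∈ w, a < n) :
    MapsTo (affWord ρ S.t w) S.T S.T := by
  induction w with
  | nil => exact mapsTo_id _
  | cons a w ih =>
    obtain ⟨ha, hw⟩ := List.forall_mem_cons.1 hw
    exact (S.mapsTo_affMap_T ha).comp (ih hw)

theorem cyl_cons (a : ℕ) (w : List ℕ) : S.cyl (a :: w) = Ψ a '' S.cyl w :=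
  image_affWord_cons _ _ _ _ _

theorem patchR_cons (β a : ℕ) (w : List ℕ) (m : ℕ) :
    S.patchR β (a :: w) m = Ψ a '' S.patchR β w m := by
  simp only [patchR, List.cons_append, cyl_cons, image_iUnion₂]

theorem patchL_cons (α a : ℕ) (w : List ℕ) (m : ℕ) :
    S.patchL α (a :: w) m = Ψ a '' S.patchL α w m := by
  simp only [patchL, List.cons_append, cyl_cons, image_iUnion₂]

theorem patchR_zero (β : ℕ) : S.patchR β [] 0 = ⋃ j ∈ Finset.Ico (n - β) n, Ψ j '' S.T := by
  simp [patchR, cyl, affWord]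

theorem patchL_zero (α : ℕ) : S.patchL α [] 0 = ⋃ j ∈ Finset.range α, Ψ j '' S.T := by
  simp [patchL, cyl, affWord]

theorem patchR_succ (β m : ℕ) : S.patchR β [] (m + 1) = Ψ (n - 1) '' S.patchR β [] m := by
  rw [← patchR_cons]
  simp [patchR, List.replicate_succ]

theorem patchL_succ (α m : ℕ) : S.patchL α [] (m + 1) = Ψ 0 '' S.patchL α [] m := by
  rw [← patchL_cons]
  simp [patchL, List.replicate_succ]

theorem Cset_eq (α β i₀ : ℕ) (τ : ℕ → ℕ) (k : ℕ) :
    Cset S α β i₀ τ k = Ψ i₀ '' S.patchR β [] k ∪ Ψ (i₀ + 1) '' S.patchL α [] (τ k) := by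
  rw [Cset, patchR_cons, patchL_cons]

theorem patchR_zero_subset_T (β : ℕ) : S.patchR β [] 0 ⊆ S.T := by
  rw [S.patchR_zero]
  exact iUnion₂_subset fun j hj => (S.mapsTo_affMap_T (Finset.mem_Ico.1 hj).2).image_subset

theorem patchL_zero_subset_T {α : ℕ} (hαn : α ≤ n) : S.patchL α [] 0 ⊆ S.T := by
  rw [S.patchL_zero]
  exact iUnion₂_subset fun j hj =>
    (S.mapsTo_affMap_T ((Finset.mem_range.1 hj).trans_le hαn)).image_subset

theorem image_T_subset_patchR_zero {β a : ℕ} (ha₁ : n - β ≤ a) (ha₂ : a < n) :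
    Ψ a '' S.T ⊆ S.patchR β [] 0 := by
  rw [S.patchR_zero]
  exact subset_iUnion₂ (s := fun j (_ : j ∈ Finset.Ico (n - β) n) => Ψ j '' S.T) a
    (Finset.mem_Ico.2 ⟨ha₁, ha₂⟩)

theorem image_T_subset_patchL_zero {α a : ℕ} (ha : a < α) : Ψ a '' S.T ⊆ S.patchL α [] 0 := by
  rw [S.patchL_zero]
  exact subset_iUnion₂ (s := fun j (_ : j ∈ Finset.range α) => Ψ j '' S.T) a
    (Finset.mem_range.2 ha)

theorem antitone_patchR {β : ℕ} (hβ : 0 < β) (hβn : β ≤ n) : Antitone (S.patchR β []) := by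
  refine antitone_of_image_iterate (S.patchR_succ β) ((S.patchR_succ β 0).trans_subset ?_)
  calc Ψ (n - 1) '' S.patchR β [] 0 ⊆ Ψ (n - 1) '' S.T := image_mono (S.patchR_zero_subset_T β)
    _ ⊆ S.patchR β [] 0 := S.image_T_subset_patchR_zero (by omega) (by omega)

theorem antitone_patchL {α : ℕ} (hα : 0 < α) (hαn : α ≤ n) : Antitone (S.patchL α []) := by
  refine antitone_of_image_iterate (S.patchL_succ α) ((S.patchL_succ α 0).trans_subset ?_)
  calc Ψ 0 '' S.patchL α [] 0 ⊆ Ψ 0 '' S.T := image_mono (S.patchL_zero_subset_T hαn)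
    _ ⊆ S.patchL α [] 0 := S.image_T_subset_patchL_zero hα

theorem patchR_subset_T {β : ℕ} (hβ : 0 < β) (hβn : β ≤ n) (m : ℕ) : S.patchR β [] m ⊆ S.T :=
  (S.antitone_patchR hβ hβn m.zero_le).trans (S.patchR_zero_subset_T β)

theorem patchL_subset_T {α : ℕ} (hα : 0 < α) (hαn : α ≤ n) (m : ℕ) : S.patchL α [] m ⊆ S.T :=
  (S.antitone_patchL hα hαn m.zero_le).trans (S.patchL_zero_subset_T hαn)

theorem affMap_one_lt_affMap_zero_of_not_touch {i : ℕ} (hi : i + 1 < n) (h : ¬ S.touch i) :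
    Ψ i 1 < Ψ (i + 1) 0 :=
  (S.order i hi).lt_of_ne fun h' => h ⟨hi, h'⟩

theorem Cset_subset_T {α β i₀ : ℕ} (hα : S.alphaRun α) (hβ : S.betaRun β) (hi₀ : S.touch i₀)
    (τ : ℕ → ℕ) (k : ℕ) : Cset S α β i₀ τ k ⊆ S.T := by
  rw [S.Cset_eq]
  exact union_subset
    ((S.mapsTo_affMap_T (Nat.lt_of_succ_lt hi₀.1)).mono_left
      (S.patchR_subset_T hβ.1 hβ.2.1.le k)).image_subset
    ((S.mapsTo_affMap_T hi₀.1).mono_left (S.patchL_subset_T hα.1 hα.2.1.le _)).image_subset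

variable {S} in
theorem alphaRun.le_sub_of_betaRun {α β : ℕ} (hα : S.alphaRun α) (hβ : S.betaRun β) :
    α ≤ n - β := by
  obtain ⟨hα₁, hαn, -, hαt⟩ := hα
  by_contra! h
  exact hαt (hβ.2.2.1 (α - 1) (by omega) (by omega))

section
include hρ

theorem affMap_one_le_affMap_zero {a b : ℕ} (hab : a < b) (hb : b < n) : Ψ a 1 ≤ Ψ b 0 := by
  induction b, hab using Nat.le_induction with
  | base => exact S.order a hb
  | succ b hab ih =>
    calc Ψ a 1 ≤ Ψ b 0 := ih (by omega)
      _ ≤ Ψ b 1 := (hρ.strictMono_affMap S.t (by omega)).monotone zero_le_one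
      _ ≤ Ψ (b + 1) 0 := S.order b hb

theorem affMap_le_affMap {a b : ℕ} (hab : a < b) (hb : b < n) {x y : ℝ} (hx : x ≤ 1)
    (hy : 0 ≤ y) : Ψ a x ≤ Ψ b y :=
  calc Ψ a x ≤ Ψ a 1 := (hρ.strictMono_affMap S.t (hab.trans hb)).monotone hx
    _ ≤ Ψ b 0 := S.affMap_one_le_affMap_zero hρ hab hb
    _ ≤ Ψ b y := (hρ.strictMono_affMap S.t hb).monotone hy

theorem affMap_le_affMap_of_le {a b : ℕ} (hab : a ≤ b) (hb : b < n) {x : ℝ}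
    (hx : x ∈ Icc 0 1) : Ψ a x ≤ Ψ b x := by
  rcases hab.eq_or_lt with rfl | hab
  · exact le_rfl
  · exact S.affMap_le_affMap hρ hab hb hx.2 hx.1

theorem zero_le_affMap_zero {a : ℕ} (ha : a < n) : 0 ≤ Ψ a 0 := by
  rcases Nat.eq_zero_or_pos a with rfl | ha₀
  · exact S.left0.ge
  · linarith [S.left0, S.affMap_le_affMap hρ ha₀ ha (x := 0) zero_le_one le_rfl]

theorem affMap_one_le_one {a : ℕ} (ha : a < n) : Ψ a 1 ≤ 1 := by
  rcases (Nat.le_sub_one_of_lt ha).eq_or_lt with rfl | ha₁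
  · exact S.right1.le
  · linarith [S.right1, S.affMap_le_affMap hρ ha₁ (by omega) (y := 1) le_rfl zero_le_one]

theorem mapsTo_affMap_Icc {a : ℕ} (ha : a < n) : MapsTo (Ψ a) (Icc 0 1) (Icc 0 1) :=
  fun _ hx => ⟨(S.zero_le_affMap_zero hρ ha).trans ((hρ.strictMono_affMap S.t ha).monotone hx.1),
    ((hρ.strictMono_affMap S.t ha).monotone hx.2).trans (S.affMap_one_le_one hρ ha)⟩

theorem mapsTo_affMap_Ioo {a : ℕ} (ha : a < n) : MapsTo (Ψ a) (Ioo 0 1) (Ioo 0 1) :=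
  fun _ hx => ⟨(S.zero_le_affMap_zero hρ ha).trans_lt (hρ.strictMono_affMap S.t ha hx.1),
    (hρ.strictMono_affMap S.t ha hx.2).trans_le (S.affMap_one_le_one hρ ha)⟩

theorem mapsTo_affWord_Ioo {w : List ℕ} (hw : ∀ a ∈ w, a < n) :
    MapsTo (affWord ρ S.t w) (Ioo 0 1) (Ioo 0 1) := by
  induction w with
  | nil => exact mapsTo_id _
  | cons a w ih =>
    obtain ⟨ha, hw⟩ := List.forall_mem_cons.1 hw
    exact (S.mapsTo_affMap_Ioo hρ ha).comp (ih hw)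

theorem disjoint_image_affMap {a b : ℕ} (hab : a ≠ b) (ha : a < n) (hb : b < n) {X Y : Set ℝ}
    (hX : X ⊆ Ioo 0 1) (hY : Y ⊆ Icc 0 1) : Disjoint (Ψ a '' X) (Ψ b '' Y) := by
  rw [disjoint_left]
  rintro _ ⟨x, hx, rfl⟩ ⟨y, hy, hxy⟩
  rcases hab.lt_or_gt with h | h
  · have := S.affMap_le_affMap hρ h hb le_rfl (hY hy).1
    linarith [hρ.strictMono_affMap S.t ha (hX hx).2]
  · have := S.affMap_le_affMap hρ h ha (hY hy).2 le_rfl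
    linarith [hρ.strictMono_affMap S.t ha (hX hx).1]

theorem T_subset_Icc : S.T ⊆ Icc 0 1 := by
  obtain ⟨M, hMT, hM⟩ := S.compactT.exists_isGreatest S.nonemptyT
  obtain ⟨m, hmT, hm⟩ := S.compactT.exists_isLeast S.nonemptyT
  obtain ⟨a, ha, y, hy, hya⟩ := S.exists_affMap_eq hMT
  obtain ⟨b, hb, z, hz, hzb⟩ := S.exists_affMap_eq hmT
  -- `M ≤ Ψ a M` places `M` below the fixed point of `Ψ a`, which is `≤ 1` as `Ψ a 1 ≤ 1`.
  have hM1 : M ≤ 1 := by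
    have h₁ := S.affMap_one_le_one hρ ha
    have h₂ := hρ.lt_one a ha
    have h₃ := mul_le_mul_of_nonneg_left (hM hy) (hρ.pos a ha).le
    unfold affMap at h₁ hya
    nlinarith
  have hm0 : 0 ≤ m := by
    have h₁ := S.zero_le_affMap_zero hρ hb
    have h₂ := hρ.lt_one b hb
    have h₃ := mul_le_mul_of_nonneg_left (hm hz) (hρ.pos b hb).le
    unfold affMap at h₁ hzb
    nlinarith
  exact fun x hx => ⟨hm0.trans (hm hx), (hM hx).trans hM1⟩

theorem image_affWord_disjoint_or_subset_iterate {c : ℕ} (hc : c < n) {R : ℕ → Set ℝ}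
    (hR : ∀ m, R (m + 1) = Ψ c '' R m) (hRI : ∀ m, R m ⊆ Icc 0 1)
    (hR₀ : ∀ a < n, Ψ a '' S.T ⊆ R 0 ∨ Disjoint (Ψ a '' Ioo 0 1) (R 0))
    {X : Set ℝ} (hXT : X ⊆ S.T) (hXI : X ⊆ Ioo 0 1)
    (hX : ∀ m, Disjoint X (R m) ∨ X ⊆ R m ∧ m ≤ 0)
    {w : List ℕ} (hw : ∀ a ∈ w, a < n) (m : ℕ) :
    Disjoint (affWord ρ S.t w '' X) (R m) ∨ affWord ρ S.t w '' X ⊆ R m ∧ m ≤ w.length := by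
  induction w generalizing m with
  | nil => simpa using hX m
  | cons a w ih =>
    obtain ⟨ha, hw'⟩ := List.forall_mem_cons.1 hw
    have hYT := ((S.mapsTo_affWord_T hw').mono_left hXT).image_subset
    have hYI := ((S.mapsTo_affWord_Ioo hρ hw').mono_left hXI).image_subset
    rw [image_affWord_cons]
    cases m with
    | zero =>
      rcases hR₀ a ha with h | h
      · exact Or.inr ⟨(image_mono hYT).trans h, Nat.zero_le _⟩
      · exact Or.inl (h.mono_left (image_mono hYI))
    | succ m =>
      rw [hR m]
      rcases eq_or_ne a c with rfl | hac
      · rw [disjoint_image_iff (hρ.strictMono_affMap S.t ha).injective]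
        exact (ih hw' m).imp_right fun h => ⟨image_mono h.1, by simp [h.2]⟩
      · exact Or.inl (S.disjoint_image_affMap hρ hac ha hc hYI (hRI m))

theorem image_subset_or_disjoint_biUnion {J : Finset ℕ} (hJ : ∀ j ∈ J, j < n) {a : ℕ}
    (ha : a < n) :
    Ψ a '' S.T ⊆ ⋃ j ∈ J, Ψ j '' S.T ∨ Disjoint (Ψ a '' Ioo 0 1) (⋃ j ∈ J, Ψ j '' S.T) := by
  by_cases haJ : a ∈ J
  · exact Or.inl (subset_iUnion₂ (s := fun j (_ : j ∈ J) => Ψ j '' S.T) a haJ)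
  · exact Or.inr (disjoint_iUnion₂_right.2 fun j hj => S.disjoint_image_affMap hρ
      (ne_of_mem_of_not_mem hj haJ).symm ha (hJ j hj) Subset.rfl (S.T_subset_Icc hρ))

theorem patchR_subset_Icc {β : ℕ} (hβ : 0 < β) (hβn : β ≤ n) (m : ℕ) :
    S.patchR β [] m ⊆ Icc 0 1 :=
  (S.patchR_subset_T hβ hβn m).trans (S.T_subset_Icc hρ)

theorem patchL_subset_Icc {α : ℕ} (hα : 0 < α) (hαn : α ≤ n) (m : ℕ) :
    S.patchL α [] m ⊆ Icc 0 1 :=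
  (S.patchL_subset_T hα hαn m).trans (S.T_subset_Icc hρ)

theorem patchR_subset_Ici {β : ℕ} (hβ : 0 < β) (hβn : β ≤ n) (m : ℕ) :
    S.patchR β [] m ⊆ Ici (Ψ (n - β) 0) := by
  refine (S.antitone_patchR hβ hβn m.zero_le).trans ?_
  rw [S.patchR_zero]
  refine iUnion₂_subset fun j hj => ?_
  rintro _ ⟨y, hy, rfl⟩
  obtain ⟨hj₁, hj₂⟩ := Finset.mem_Ico.1 hj
  exact (S.affMap_le_affMap_of_le hρ hj₁ hj₂ ⟨le_rfl, zero_le_one⟩).trans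
    ((hρ.strictMono_affMap S.t hj₂).monotone (S.T_subset_Icc hρ hy).1)

theorem patchL_subset_Iic {α : ℕ} (hα : 0 < α) (hαn : α ≤ n) (m : ℕ) :
    S.patchL α [] m ⊆ Iic (Ψ (α - 1) 1) := by
  refine (S.antitone_patchL hα hαn m.zero_le).trans ?_
  rw [S.patchL_zero]
  refine iUnion₂_subset fun j hj => ?_
  rintro _ ⟨y, hy, rfl⟩
  have hj := Finset.mem_range.1 hj
  exact ((hρ.strictMono_affMap S.t (by omega)).monotone (S.T_subset_Icc hρ hy).2).trans
    (S.affMap_le_affMap_of_le hρ (by omega) (by omega) ⟨zero_le_one, le_rfl⟩)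

theorem patchR_succ_subset_Ici {β : ℕ} (hβ : 0 < β) (hβn : β ≤ n) (m : ℕ) :
    S.patchR β [] (m + 1) ⊆ Ici (Ψ (n - 1) (Ψ (n - β) 0)) := by
  rw [S.patchR_succ]
  rintro _ ⟨y, hy, rfl⟩
  exact (hρ.strictMono_affMap S.t (by omega)).monotone (S.patchR_subset_Ici hρ hβ hβn m hy)

theorem patchL_succ_subset_Iic {α : ℕ} (hα : 0 < α) (hαn : α ≤ n) (m : ℕ) :
    S.patchL α [] (m + 1) ⊆ Iic (Ψ 0 (Ψ (α - 1) 1)) := by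
  rw [S.patchL_succ]
  rintro _ ⟨y, hy, rfl⟩
  exact (hρ.strictMono_affMap S.t (by omega)).monotone (S.patchL_subset_Iic hρ hα hαn m hy)

theorem zero_lt_affMap_betaRun {β : ℕ} (hβ : S.betaRun β) : 0 < Ψ (n - β) 0 := by
  obtain ⟨hβ₁, hβn, -, hβt⟩ := hβ
  have hgap := S.affMap_one_lt_affMap_zero_of_not_touch (i := n - β - 1) (by omega) hβt
  rw [show n - β - 1 + 1 = n - β by omega] at hgap
  exact (S.mapsTo_affMap_Icc hρ (by omega) ⟨zero_le_one, le_rfl⟩).1.trans_lt hgap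

theorem affMap_alphaRun_lt_one {α : ℕ} (hα : S.alphaRun α) : Ψ (α - 1) 1 < 1 := by
  obtain ⟨hα₁, hαn, -, hαt⟩ := hα
  have hgap := S.affMap_one_lt_affMap_zero_of_not_touch (i := α - 1) (by omega) hαt
  rw [show α - 1 + 1 = α by omega] at hgap
  exact hgap.trans_le (S.mapsTo_affMap_Icc hρ hαn ⟨le_rfl, zero_le_one⟩).2

theorem affMap_alphaRun_lt_affMap_betaRun {α β : ℕ} (hα : S.alphaRun α) (hβ : S.betaRun β) :
    Ψ (α - 1) 1 < Ψ (n - β) 0 := by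
  have hle := hα.le_sub_of_betaRun hβ
  obtain ⟨hα₁, hαn, -, hαt⟩ := hα
  have hgap := S.affMap_one_lt_affMap_zero_of_not_touch (i := α - 1) (by omega) hαt
  rw [show α - 1 + 1 = α by omega] at hgap
  exact hgap.trans_le
    (S.affMap_le_affMap_of_le hρ hle (by have := hβ.1; omega) ⟨le_rfl, zero_le_one⟩)

theorem Cset_subset_Icc {α β i₀ : ℕ} (hα : S.alphaRun α) (hβ : S.betaRun β) (hi₀ : S.touch i₀)
    (τ : ℕ → ℕ) (k : ℕ) :
    Cset S α β i₀ τ k ⊆ Icc (Ψ i₀ (Ψ (n - β) 0)) (Ψ (i₀ + 1) (Ψ (α - 1) 1)) := by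
  have hi₀n := hi₀.1
  have hl := S.mapsTo_affMap_Icc hρ (a := α - 1) (by have := hα.2.1; omega) ⟨zero_le_one, le_rfl⟩
  have hr := S.mapsTo_affMap_Icc hρ (a := n - β) (by have := hβ.1; have := hβ.2.1; omega)
    ⟨le_rfl, zero_le_one⟩
  rw [S.Cset_eq]
  refine union_subset ?_ ?_ <;> rintro _ ⟨y, hy, rfl⟩
  · have hyI := S.patchR_subset_Icc hρ hβ.1 hβ.2.1.le k hy
    exact ⟨(hρ.strictMono_affMap S.t (by omega)).monotone
        (S.patchR_subset_Ici hρ hβ.1 hβ.2.1.le k hy),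
      S.affMap_le_affMap hρ i₀.lt_succ_self hi₀.1 hyI.2 hl.1⟩
  · have hyI := S.patchL_subset_Icc hρ hα.1 hα.2.1.le _ hy
    exact ⟨S.affMap_le_affMap hρ i₀.lt_succ_self hi₀.1 hr.2 hyI.1,
      (hρ.strictMono_affMap S.t hi₀.1).monotone (S.patchL_subset_Iic hρ hα.1 hα.2.1.le _ hy)⟩

theorem Cset_subset_Ioo {α β i₀ : ℕ} (hα : S.alphaRun α) (hβ : S.betaRun β) (hi₀ : S.touch i₀)
    (τ : ℕ → ℕ) (k : ℕ) : Cset S α β i₀ τ k ⊆ Ioo 0 1 :=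
  (S.Cset_subset_Icc hρ hα hβ hi₀ τ k).trans <| Icc_subset_Ioo
    ((S.zero_le_affMap_zero hρ (Nat.lt_of_succ_lt hi₀.1)).trans_lt
      (hρ.strictMono_affMap S.t (Nat.lt_of_succ_lt hi₀.1) (S.zero_lt_affMap_betaRun hρ hβ)))
    ((hρ.strictMono_affMap S.t hi₀.1 (S.affMap_alphaRun_lt_one hρ hα)).trans_le
      (S.affMap_one_le_one hρ hi₀.1))

theorem image_affWord_Cset_subset_Ioo {α β i₀ : ℕ} (hα : S.alphaRun α) (hβ : S.betaRun β)
    (hi₀ : S.touch i₀) (τ : ℕ → ℕ) (k : ℕ) {w : List ℕ} (hw : ∀ a ∈ w, a < n) :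
    affWord ρ S.t w '' Cset S α β i₀ τ k ⊆ Ioo 0 1 :=
  ((S.mapsTo_affWord_Ioo hρ hw).mono_left (S.Cset_subset_Ioo hρ hα hβ hi₀ τ k)).image_subset

theorem Cset_disjoint_or_subset_patchR {α β i₀ : ℕ} (hα : S.alphaRun α) (hβ : S.betaRun β)
    (hi₀ : S.touch i₀) (τ : ℕ → ℕ) (k m : ℕ) :
    Disjoint (Cset S α β i₀ τ k) (S.patchR β [] m) ∨
      Cset S α β i₀ τ k ⊆ S.patchR β [] m ∧ m ≤ 0 := by
  have hi₀n := hi₀.1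
  have ⟨hβ₁, hβn, _, hβt⟩ := hβ
  have hC := (S.Cset_subset_Icc hρ hα hβ hi₀ τ k).trans Icc_subset_Iic_self
  rcases m with _ | m
  · by_cases h : n - β ≤ i₀
    · refine Or.inr ⟨?_, le_rfl⟩
      rw [S.Cset_eq]
      exact union_subset
        ((image_mono (S.patchR_subset_T hβ₁ hβn.le k)).trans
          (S.image_T_subset_patchR_zero h (by omega)))
        ((image_mono (S.patchL_subset_T hα.1 hα.2.1.le _)).trans
          (S.image_T_subset_patchR_zero (by omega) hi₀n))
    -- `n - β - 1` is not a touching letter, so `C` lies below the whole cylinder `Ψ (n - β)`.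
    have h' : i₀ + 1 < n - β := by
      by_contra h'
      exact hβt (show n - β - 1 = i₀ by omega ▸ hi₀)
    refine Or.inl ((Iic_disjoint_Ici.2 (not_le.2 ?_)).mono hC
      (S.patchR_subset_Ici hρ hβ₁ hβn.le 0))
    exact (hρ.strictMono_affMap S.t hi₀n (S.affMap_alphaRun_lt_one hρ hα)).trans_le
      (S.affMap_le_affMap hρ h' (by omega) le_rfl le_rfl)
  · refine Or.inl ((Iic_disjoint_Ici.2 (not_le.2 ?_)).mono hC
      (S.patchR_succ_subset_Ici hρ hβ₁ hβn.le m))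
    have hr := S.mapsTo_affMap_Icc hρ (a := n - β) (by omega) ⟨le_rfl, zero_le_one⟩
    exact (hρ.strictMono_affMap S.t hi₀n (S.affMap_alphaRun_lt_affMap_betaRun hρ hα hβ)).trans_le
      (S.affMap_le_affMap_of_le hρ (by omega) (by omega) hr)

theorem Cset_disjoint_or_subset_patchL {α β i₀ : ℕ} (hα : S.alphaRun α) (hβ : S.betaRun β)
    (hi₀ : S.touch i₀) (τ : ℕ → ℕ) (k m : ℕ) :
    Disjoint (Cset S α β i₀ τ k) (S.patchL α [] m) ∨
      Cset S α β i₀ τ k ⊆ S.patchL α [] m ∧ m ≤ 0 := by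
  have hi₀n := hi₀.1
  have ⟨hα₁, hαn, _, hαt⟩ := hα
  have hC := (S.Cset_subset_Icc hρ hα hβ hi₀ τ k).trans Icc_subset_Ici_self
  have hr := S.zero_lt_affMap_betaRun hρ hβ
  rcases m with _ | m
  · by_cases h : i₀ + 1 < α
    · refine Or.inr ⟨?_, le_rfl⟩
      rw [S.Cset_eq]
      exact union_subset
        ((image_mono (S.patchR_subset_T hβ.1 hβ.2.1.le k)).trans
          (S.image_T_subset_patchL_zero (by omega)))
        ((image_mono (S.patchL_subset_T hα₁ hαn.le _)).trans (S.image_T_subset_patchL_zero h))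
    -- `α - 1` is not a touching letter, so `C` lies above the whole cylinder `Ψ (α - 1)`.
    have h' : α - 1 < i₀ := by
      by_contra h'
      exact hαt (show α - 1 = i₀ by omega ▸ hi₀)
    refine Or.inl ((Iic_disjoint_Ici.2 (not_le.2 ?_)).mono
      (S.patchL_subset_Iic hρ hα₁ hαn.le 0) hC).symm
    exact (S.affMap_le_affMap hρ h' (by omega) le_rfl le_rfl).trans_lt
      (hρ.strictMono_affMap S.t (by omega) hr)
  · refine Or.inl ((Iic_disjoint_Ici.2 (not_le.2 ?_)).mono
      (S.patchL_succ_subset_Iic hρ hα₁ hαn.le m) hC).symm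
    have hl := S.mapsTo_affMap_Icc hρ (a := α - 1) (by omega) ⟨zero_le_one, le_rfl⟩
    exact (S.affMap_le_affMap_of_le hρ i₀.zero_le (by omega) hl).trans_lt
      (hρ.strictMono_affMap S.t (by omega) (S.affMap_alphaRun_lt_affMap_betaRun hρ hα hβ))

theorem antitoneOn_Cset {α β i₀ : ℕ} (hα : S.alphaRun α) (hβ : S.betaRun β) {τ : ℕ → ℕ}
    (hτ : tauSpec ρ n τ) : AntitoneOn (Cset S α β i₀ τ) (Ici 1) := fun ℓ hℓ k hk hℓk => by
  rw [S.Cset_eq, S.Cset_eq]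
  exact union_subset_union (image_mono (S.antitone_patchR hβ.1 hβ.2.1.le hℓk))
    (image_mono (S.antitone_patchL hα.1 hα.2.1.le (hτ.monotoneOn hρ hℓ hk hℓk)))

theorem image_affWord_Cset_disjoint_or_subset_patchR {α β i₀ : ℕ} (hα : S.alphaRun α)
    (hβ : S.betaRun β) (hi₀ : S.touch i₀) (τ : ℕ → ℕ) (k : ℕ) {w : List ℕ}
    (hw : ∀ a ∈ w, a < n) (m : ℕ) :
    Disjoint (affWord ρ S.t w '' Cset S α β i₀ τ k) (S.patchR β [] m) ∨
      affWord ρ S.t w '' Cset S α β i₀ τ k ⊆ S.patchR β [] m ∧ m ≤ w.length :=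
  S.image_affWord_disjoint_or_subset_iterate hρ (by have := hβ.2.1; omega) (S.patchR_succ β)
    (S.patchR_subset_Icc hρ hβ.1 hβ.2.1.le)
    (fun _ ha => S.patchR_zero β ▸
      S.image_subset_or_disjoint_biUnion hρ (fun j hj => (Finset.mem_Ico.1 hj).2) ha)
    (S.Cset_subset_T hα hβ hi₀ τ k) (S.Cset_subset_Ioo hρ hα hβ hi₀ τ k)
    (S.Cset_disjoint_or_subset_patchR hρ hα hβ hi₀ τ k) hw m

theorem image_affWord_Cset_disjoint_or_subset_patchL {α β i₀ : ℕ} (hα : S.alphaRun α)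
    (hβ : S.betaRun β) (hi₀ : S.touch i₀) (τ : ℕ → ℕ) (k : ℕ) {w : List ℕ}
    (hw : ∀ a ∈ w, a < n) (m : ℕ) :
    Disjoint (affWord ρ S.t w '' Cset S α β i₀ τ k) (S.patchL α [] m) ∨
      affWord ρ S.t w '' Cset S α β i₀ τ k ⊆ S.patchL α [] m ∧ m ≤ w.length :=
  S.image_affWord_disjoint_or_subset_iterate hρ (by have := hα.2.1; omega) (S.patchL_succ α)
    (S.patchL_subset_Icc hρ hα.1 hα.2.1.le)
    (fun _ ha => S.patchL_zero α ▸ S.image_subset_or_disjoint_biUnion hρ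
      (fun j hj => (Finset.mem_range.1 hj).trans hα.2.1) ha)
    (S.Cset_subset_T hα hβ hi₀ τ k) (S.Cset_subset_Ioo hρ hα hβ hi₀ τ k)
    (S.Cset_disjoint_or_subset_patchL hρ hα hβ hi₀ τ k) hw m

theorem image_affWord_Cset_disjoint_or_subset {α β i₀ : ℕ} (hα : S.alphaRun α)
    (hβ : S.betaRun β) (hi₀ : S.touch i₀) (hρ1n : ρ (n - 1) ≤ ρ 0) {τ : ℕ → ℕ}
    (hτ : tauSpec ρ n τ) {w : List ℕ} (hw : ∀ a ∈ w, a < n) (hne : w ≠ []) (k ℓ : ℕ) :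
    Disjoint (affWord ρ S.t w '' Cset S α β i₀ τ k) (Cset S α β i₀ τ ℓ) ∨
      affWord ρ S.t w '' Cset S α β i₀ τ k ⊆ Cset S α β i₀ τ ℓ ∧ ℓ < w.length := by
  obtain ⟨a, w, rfl⟩ := List.exists_cons_of_ne_nil hne
  obtain ⟨ha, hw'⟩ := List.forall_mem_cons.1 hw
  have hi₀n := hi₀.1
  have hinj := (hρ.strictMono_affMap S.t ha).injective
  have hYI := S.image_affWord_Cset_subset_Ioo hρ hα hβ hi₀ τ k hw'
  have hRI := S.patchR_subset_Icc hρ hβ.1 hβ.2.1.le ℓ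
  have hLI := S.patchL_subset_Icc hρ hα.1 hα.2.1.le (τ ℓ)
  rw [image_affWord_cons, S.Cset_eq α β i₀ τ ℓ, disjoint_union_right]
  by_cases ha₀ : a = i₀
  · subst ha₀
    have hsep := S.disjoint_image_affMap hρ (Nat.succ_ne_self a).symm ha hi₀n hYI hLI
    rcases S.image_affWord_Cset_disjoint_or_subset_patchR hρ hα hβ hi₀ τ k hw' ℓ with h | h
    · exact Or.inl ⟨(disjoint_image_iff hinj).2 h, hsep⟩
    · exact Or.inr ⟨(image_mono h.1).trans subset_union_left, by simp; omega⟩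
  by_cases ha₁ : a = i₀ + 1
  · subst ha₁
    have hsep := S.disjoint_image_affMap hρ (Nat.succ_ne_self i₀) ha (by omega) hYI hRI
    rcases S.image_affWord_Cset_disjoint_or_subset_patchL hρ hα hβ hi₀ τ k hw' (τ ℓ) with h | h
    · exact Or.inl ⟨hsep, (disjoint_image_iff hinj).2 h⟩
    · have := hτ.self_le hρ hρ1n ℓ
      exact Or.inr ⟨(image_mono h.1).trans subset_union_right, by simp; omega⟩
  exact Or.inl ⟨S.disjoint_image_affMap hρ ha₀ ha (by omega) hYI hRI,
    S.disjoint_image_affMap hρ ha₁ ha hi₀n hYI hLI⟩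

end

end TouchingIFS

theorem Cset_nested_or_disjoint_general {n : ℕ} {ρ : ℕ → ℝ} (hρ : ContractionVec n ρ)
    (S : TouchingIFS n ρ) (α β i₀ : ℕ)
    (hα : S.alphaRun α) (hβ : S.betaRun β) (hi₀ : S.touch i₀)
    (hρ1n : ρ (n - 1) ≤ ρ 0) (τ : ℕ → ℕ) (hτ : tauSpec ρ n τ)
    (i j : List ℕ) (hi : ∀ a ∈ i, a < n) (hj : ∀ a ∈ j, a < n)
    (k ℓ : ℕ) (hℓ : 1 ≤ ℓ)
    (hlen : j.length + ℓ < i.length + k) :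
    (affWord ρ S.t i '' Cset S α β i₀ τ k) ∩ (affWord ρ S.t j '' Cset S α β i₀ τ ℓ) = ∅ ∨
    affWord ρ S.t i '' Cset S α β i₀ τ k ⊆ affWord ρ S.t j '' Cset S α β i₀ τ ℓ := by
  rw [← disjoint_iff_inter_eq_empty]
  induction j generalizing i with
  | nil =>
    cases i with
    | nil =>
      simp only [affWord_nil, image_id, List.length_nil, zero_add] at hlen ⊢
      exact Or.inr (S.antitoneOn_Cset hρ hα hβ hτ hℓ (mem_Ici.2 (by omega)) hlen.le)
    | cons a i =>
      simpa using (S.image_affWord_Cset_disjoint_or_subset hρ hα hβ hi₀ hρ1n hτ hi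
        (List.cons_ne_nil a i) k ℓ).imp_right And.left
  | cons b j ih =>
    cases i with
    | nil =>
      have h := S.image_affWord_Cset_disjoint_or_subset hρ hα hβ hi₀ hρ1n hτ hj
        (List.cons_ne_nil b j) ℓ k
      simp only [affWord_nil, image_id, List.length_cons, List.length_nil] at h hlen ⊢
      exact Or.inl (h.resolve_right fun h' => by omega).symm
    | cons a i =>
      obtain ⟨ha, hi'⟩ := List.forall_mem_cons.1 hi
      obtain ⟨hb, hj'⟩ := List.forall_mem_cons.1 hj
      rw [image_affWord_cons, image_affWord_cons]
      rcases eq_or_ne a b with rfl | hab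
      · rw [disjoint_image_iff (hρ.strictMono_affMap S.t ha).injective]
        exact (ih i hi' hj' (by simp only [List.length_cons] at hlen; omega)).imp_right
          (image_mono ·)
      · exact Or.inl (S.disjoint_image_affMap hρ hab ha hb
          (S.image_affWord_Cset_subset_Ioo hρ hα hβ hi₀ τ k hi')
          ((S.image_affWord_Cset_subset_Ioo hρ hα hβ hi₀ τ ℓ hj').trans Ioo_subset_Icc_self))

/-- a set of `𝒞_u` is either disjoint from or contained in a set of `𝒞_v`
when `u > v`. -/
theorem Cset_nested_or_disjoint {n : ℕ} {ρ : ℕ → ℝ} (hρ : ContractionVec n ρ)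
    (S : TouchingIFS n ρ) (α β i₀ : ℕ)
    (hα : S.alphaRun α) (hβ : S.betaRun β) (hi₀ : S.touch i₀)
    (hρ1n : ρ (n - 1) ≤ ρ 0) (τ : ℕ → ℕ) (hτ : tauSpec ρ n τ)
    (i j : List ℕ) (hi : ∀ a ∈ i, a < n) (hj : ∀ a ∈ j, a < n)
    (k ℓ : ℕ) (hk : 1 ≤ k) (hℓ : 1 ≤ ℓ)
    (hlen : j.length + ℓ < i.length + k) :
    (affWord ρ S.t i '' Cset S α β i₀ τ k) ∩ (affWord ρ S.t j '' Cset S α β i₀ τ ℓ) = ∅ ∨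
    affWord ρ S.t i '' Cset S α β i₀ τ k ⊆ affWord ρ S.t j '' Cset S α β i₀ τ ℓ :=
  Cset_nested_or_disjoint_general hρ S α β i₀ hα hβ hi₀ hρ1n τ hτ i j hi hj k ℓ hℓ hlen
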